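/- arXiv:1502.07734 — 2 statements merged into one kernel-verified Lean document; each statement's English description precedes it below -/
import Mathlib

section
/- Let $a \in [0,1)$ and $\hat{e}_k = \sqrt{1-a^2} \sum_{m=0}^{\infty} a^m e_{k \cdot 2^m}$ for $k \neq 0$, where $e_j(x) = e^{2\pi i j x}$. If $j, k$ are both odd nonzero integers with $j \neq k$, then $\langle \hat{e}_j, \hat{e}_k \rangle_{L^2([0,1])} = 0$. -/
open MeasureTheory

/-- The classical Fourier character `e_j(x) = exp(2πijx)`. -/
noncomputable def fourierE (j : ℤ) (x : ℝ) : ℂ :=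
  Complex.exp (2 * Real.pi * Complex.I * j * x)

/-- `ê_k = √(1-a²) ∑_{m≥0} aᵐ e_{k·2ᵐ}`. -/
noncomputable def hatE (a : ℝ) (k : ℤ) (x : ℝ) : ℂ :=
  (Real.sqrt (1 - a ^ 2) : ℂ) * ∑' m : ℕ, (a : ℂ) ^ m * fourierE (k * 2 ^ m) x

/-- The Weierstrass Fourier basis functions `ẽ_k`. -/
noncomputable def tildeE (a : ℝ) (k : ℤ) (x : ℝ) : ℂ :=
  if k = 0 then 1
  else if Odd k then hatE a k x
  else ((1 - a ^ 2 : ℝ) : ℂ) * ∑' m : ℕ, (a : ℂ) ^ m * fourierE (k * 2 ^ m) x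
       - (a : ℂ) * fourierE (k / 2) x

/-- The `L²([0,1])` inner product `⟨f, g⟩ = ∫₀¹ f ḡ`. -/
noncomputable def inner01 (f g : ℝ → ℂ) : ℂ :=
  ∫ x in Set.Icc (0:ℝ) 1, f x * (starRingEnd ℂ) (g x)

lemma fourierE_cont (j : ℤ) : Continuous (fourierE j) := by
  unfold fourierE; fun_prop

lemma norm_fourierE (j : ℤ) (x : ℝ) : ‖fourierE j x‖ = 1 := by
  unfold fourierE
  rw [show (2 * Real.pi * Complex.I * j * x : ℂ)
      = ((2 * Real.pi * j * x : ℝ) : ℂ) * Complex.I by push_cast; ring]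
  rw [Complex.norm_exp_ofReal_mul_I]

lemma fourierE_mul_star (A B : ℤ) (x : ℝ) :
    fourierE A x * star (fourierE B x) = fourierE (A - B) x := by
  unfold fourierE
  rw [show (star (Complex.exp (2 * Real.pi * Complex.I * B * x))
      = Complex.exp (star (2 * Real.pi * Complex.I * B * x : ℂ))) from
      (Complex.exp_conj _).symm, ← Complex.exp_add]
  congr 1
  simp only [star_mul', Complex.star_def, Complex.conj_I, Complex.conj_ofReal,
    map_ofNat, map_intCast]
  push_cast; ring

lemma integral_fourierE (N : ℤ) (hN : N ≠ 0) :
    ∫ x in Set.Icc (0:ℝ) 1, fourierE N x = 0 := by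
  have hc : (2 * Real.pi * Complex.I * N : ℂ) ≠ 0 := by
    simp [Real.pi_ne_zero, Complex.I_ne_zero, hN]
  rw [MeasureTheory.integral_Icc_eq_integral_Ioc,
    ← intervalIntegral.integral_of_le (zero_le_one)]
  have : ∀ x : ℝ, fourierE N x = Complex.exp ((2 * Real.pi * Complex.I * N) * x) := by
    intro x; rfl
  simp_rw [this]
  rw [integral_exp_mul_complex hc]
  have h1 : Complex.exp ((2 * Real.pi * Complex.I * N : ℂ)) = 1 := by
    rw [show ((2 * Real.pi * Complex.I * N : ℂ))
        = (N : ℂ) * (2 * Real.pi * Complex.I) by ring]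
    exact Complex.exp_int_mul_two_pi_mul_I N
  simp [h1]

lemma aux_ne {j k : ℤ} (hj : Odd j) (hjk : j ≠ k) {m n : ℕ} (hmn : m ≤ n)
    (h : j * 2 ^ m = k * 2 ^ n) : False := by
  have h2 : (2:ℤ) ^ m ≠ 0 := pow_ne_zero _ two_ne_zero
  have hkey : j = k * 2 ^ (n - m) := by
    apply mul_right_cancel₀ h2
    rw [h, mul_assoc, ← pow_add]
    congr 2
    omega
  rcases Nat.eq_zero_or_pos (n - m) with h0 | h0
  · rw [h0, pow_zero, mul_one] at hkey; exact hjk hkey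
  · have : (2:ℤ) ∣ j := by
      rw [hkey]
      exact Dvd.dvd.mul_left (dvd_pow_self 2 h0.ne') k
    rw [Int.not_even_iff_odd.symm] at hj
    exact hj (even_iff_two_dvd.mpr this)

lemma key_ne {j k : ℤ} (hj : Odd j) (hk : Odd k) (hjk : j ≠ k) (m n : ℕ) :
    j * 2 ^ m ≠ k * 2 ^ n := by
  intro h
  rcases le_total m n with hmn | hmn
  · exact aux_ne hj hjk hmn h
  · exact aux_ne hk (Ne.symm hjk) hmn h.symm

/-- For `a ∈ [0,1)` and distinct odd nonzero `j ≠ k`, `⟨ê_j, ê_k⟩ = 0`. -/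
theorem dwft_stmt6 (a : ℝ) (ha0 : 0 ≤ a) (ha1 : a < 1) (j k : ℤ)
    (hj : Odd j) (hk : Odd k) (hj0 : j ≠ 0) (hk0 : k ≠ 0) (hjk : j ≠ k) :
    inner01 (hatE a j) (hatE a k) = 0 := by
  have hSa : Summable (fun m : ℕ => a ^ m) := summable_geometric_of_lt_one ha0 ha1
  set c : ℂ := ((Real.sqrt (1 - a ^ 2) : ℝ) : ℂ) with hc
  have hnorm : ∀ (l : ℤ) (x : ℝ) (m : ℕ), ‖(a:ℂ)^m * fourierE (l * 2^m) x‖ = a^m := by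
    intro l x m
    rw [norm_mul, norm_pow, Complex.norm_real, Real.norm_of_nonneg ha0, norm_fourierE, mul_one]
  set F : ℕ × ℕ → ℝ → ℂ := fun p x =>
    ((a:ℂ)^p.1 * fourierE (j * 2^p.1) x) * star ((a:ℂ)^p.2 * fourierE (k * 2^p.2) x) with hF
  have hprod : ∀ x : ℝ, hatE a j x * (starRingEnd ℂ) (hatE a k x)
      = (c * star c) * ∑' p : ℕ × ℕ, F p x := by
    intro x
    unfold hatE
    rw [starRingEnd_apply, star_mul', tsum_star]
    simp only [hF]
    rw [← tsum_mul_tsum_of_summable_norm (hSa.congr fun m => (hnorm j x m).symm)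
      (hSa.congr fun n => by rw [norm_star, hnorm] :
        Summable fun n : ℕ => ‖star ((a:ℂ)^n * fourierE (k * 2^n) x)‖)]
    ring
  have hFcont : ∀ p : ℕ × ℕ, Continuous (F p) := by
    intro p
    exact (continuous_const.mul (fourierE_cont _)).mul
      (continuous_const.mul (fourierE_cont _)).star
  have hFint : ∀ p : ℕ × ℕ, IntegrableOn (F p) (Set.Icc (0:ℝ) 1) :=
    fun p => (hFcont p).integrableOn_Icc
  have hBnorm : ∀ (p : ℕ × ℕ) (x : ℝ), ‖F p x‖ = a ^ p.1 * a ^ p.2 := by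
    intro p x
    rw [hF]
    simp only
    rw [norm_mul, norm_star, hnorm, hnorm]
  have hSum : Summable (fun p : ℕ × ℕ => ∫ x in Set.Icc (0:ℝ) 1, ‖F p x‖) := by
    have heq : ∀ p : ℕ × ℕ, (∫ x in Set.Icc (0:ℝ) 1, ‖F p x‖) = a ^ p.1 * a ^ p.2 := by
      intro p
      simp_rw [hBnorm p]
      rw [setIntegral_const]
      simp [Real.volume_Icc]
    exact (hSa.mul_of_nonneg hSa (fun m => pow_nonneg ha0 m)
      (fun m => pow_nonneg ha0 m)).congr fun p => (heq p).symm
  have hzero : ∀ p : ℕ × ℕ, (∫ x in Set.Icc (0:ℝ) 1, F p x) = 0 := by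
    rintro ⟨m, n⟩
    have heq : ∀ x : ℝ, F (m, n) x
        = ((a:ℂ)^m * star ((a:ℂ)^n)) * fourierE (j * 2^m - k * 2^n) x := by
      intro x
      rw [hF]
      simp only
      rw [star_mul', ← fourierE_mul_star]
      ring
    simp_rw [heq]
    rw [integral_const_mul, integral_fourierE _ (sub_ne_zero.mpr (key_ne hj hk hjk m n)),
      mul_zero]
  unfold inner01
  simp_rw [hprod]
  rw [integral_const_mul, ← integral_tsum_of_summable_integral_norm hFint hSum]
  simp [hzero]
end

section
/- Let $a \in [0,1)$ and let $\{\tilde{e}_k\}_{k \in \mathbb{Z}}$ be the orthonormal family defined by $\tilde{e}_0 = 1$, $\tilde{e}_k = \sqrt{1-a^2} \sum_{m \geq 0} a^m e_{k \cdot 2^m}$ for odd $k$, and $\tilde{e}_k = (1-a^2) \sum_{m \geq 0} a^m e_{k \cdot 2^m} - a e_{k/2}$ for even nonzero $k$. Then the closed linear span of $\{\tilde{e}_k\}_{k \in \mathbb{Z}}$ is all of $L^2([0,1])$, i.e., $\{\tilde{e}_k\}$ is a complete orthonormal basis. -/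
open MeasureTheory

namespace DWFTAux

lemma fourierE_norm (j : ℤ) (x : ℝ) : ‖fourierE j x‖ = 1 := by
  rw [fourierE, Complex.norm_exp]
  have h : (2 * Real.pi * Complex.I * j * x).re = 0 := by simp
  rw [h, Real.exp_zero]

lemma fourierE_continuous (j : ℤ) : Continuous (fourierE j) := by
  unfold fourierE; fun_prop

lemma fourierE_conj (j : ℤ) (x : ℝ) :
    (starRingEnd ℂ) (fourierE j x) = fourierE (-j) x := by
  rw [fourierE, fourierE, ← Complex.exp_conj]
  congr 1
  simp only [map_mul, Complex.conj_ofReal, Complex.conj_I, map_intCast, map_ofNat]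
  push_cast
  ring

section

variable {a : ℝ} {f : ℝ → ℂ}

lemma norm_apow (ha0 : 0 ≤ a) (m : ℕ) : ‖(a:ℂ)^m‖ = a^m := by
  rw [norm_pow, Complex.norm_real, Real.norm_of_nonneg ha0]

lemma term_norm (ha0 : 0 ≤ a) (k : ℤ) (m : ℕ) (x : ℝ) :
    ‖(a:ℂ)^m * fourierE (k*2^m) x‖ = a^m := by
  rw [norm_mul, fourierE_norm, mul_one, norm_apow ha0]

lemma tsumF_continuous (ha0 : 0 ≤ a) (ha1 : a < 1) (k : ℤ) :
    Continuous (fun x => ∑' m : ℕ, (a:ℂ)^m * fourierE (k*2^m) x) := by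
  apply continuous_tsum (fun m => continuous_const.mul (fourierE_continuous _))
    (summable_geometric_of_lt_one ha0 ha1)
  intro n x; simp only [Pi.mul_apply]; rw [term_norm ha0]

lemma tsumF_bound (ha0 : 0 ≤ a) (ha1 : a < 1) (k : ℤ) (x : ℝ) :
    ‖∑' m : ℕ, (a:ℂ)^m * fourierE (k*2^m) x‖ ≤ (1-a)⁻¹ := by
  calc ‖∑' m : ℕ, (a:ℂ)^m * fourierE (k*2^m) x‖ ≤ ∑' m : ℕ, a^m :=
        tsum_of_norm_bounded (summable_geometric_of_lt_one ha0 ha1).hasSum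
          (fun m => le_of_eq (term_norm ha0 k m x))
    _ = (1-a)⁻¹ := tsum_geometric_of_lt_one ha0 ha1

lemma int_mul_conj (hfi : Integrable f (volume.restrict (Set.Icc (0:ℝ) 1)))
    {g : ℝ → ℂ} (hg : Continuous g) {C : ℝ} (hC : ∀ x, ‖g x‖ ≤ C) :
    Integrable (fun x => f x * (starRingEnd ℂ) (g x))
      (volume.restrict (Set.Icc (0:ℝ) 1)) := by
  have h2 := Integrable.bdd_mul (f := fun x => (starRingEnd ℂ) (g x)) (c := C) hfi
    ((Complex.continuous_conj.comp hg).aestronglyMeasurable)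
    (Filter.Eventually.of_forall fun x => by simpa using hC x)
  simpa [mul_comm] using h2

lemma cj_bound (j : ℤ) : ‖inner01 f (fourierE j)‖ ≤ ∫ x in Set.Icc (0:ℝ) 1, ‖f x‖ := by
  refine (norm_integral_le_integral_norm _).trans (le_of_eq ?_)
  congr 1; funext x
  rw [norm_mul, RingHomIsometric.norm_map, fourierE_norm, mul_one]

lemma inner_tsumF (ha0 : 0 ≤ a) (ha1 : a < 1)
    (hfi : Integrable f (volume.restrict (Set.Icc (0:ℝ) 1))) (k : ℤ) :
    inner01 f (fun x => ∑' m : ℕ, (a:ℂ)^m * fourierE (k*2^m) x)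
      = ∑' m : ℕ, (a:ℂ)^m * inner01 f (fourierE (k*2^m)) := by
  unfold inner01
  have h1 : ∀ x, f x * (starRingEnd ℂ) (∑' m : ℕ, (a:ℂ)^m * fourierE (k*2^m) x)
      = ∑' m : ℕ, (a:ℂ)^m * (f x * (starRingEnd ℂ) (fourierE (k*2^m) x)) := by
    intro x
    rw [starRingEnd_apply, tsum_star, ← tsum_mul_left]
    congr 1; funext m
    simp only [star_mul', star_pow, Complex.star_def, Complex.conj_ofReal]
    ring
  simp_rw [h1]
  rw [← integral_tsum_of_summable_integral_norm]
  · exact tsum_congr fun m => by rw [integral_const_mul]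
  · intro m
    exact (int_mul_conj hfi (fourierE_continuous _)
      (fun x => le_of_eq (fourierE_norm _ x))).const_mul _
  · apply Summable.of_nonneg_of_le (fun m => integral_nonneg fun x => norm_nonneg _)
      (fun m => ?_) (((summable_geometric_of_lt_one ha0 ha1)).mul_right
        (∫ x in Set.Icc (0:ℝ) 1, ‖f x‖))
    have h3 : ∀ x, ‖(a:ℂ)^m * (f x * (starRingEnd ℂ) (fourierE (k*2^m) x))‖
        = a^m * ‖f x‖ := by
      intro x
      rw [norm_mul, norm_apow ha0, norm_mul, RingHomIsometric.norm_map, fourierE_norm, mul_one]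
    simp_rw [h3]
    rw [integral_const_mul]

lemma inner01_real_mul (f : ℝ → ℂ) (r : ℝ) (G : ℝ → ℂ) :
    inner01 f (fun x => (r:ℂ) * G x) = (r:ℂ) * inner01 f G := by
  unfold inner01
  have e : ∀ x, f x * (starRingEnd ℂ) ((r:ℂ) * G x)
      = (r:ℂ) * (f x * (starRingEnd ℂ) (G x)) := by
    intro x; rw [map_mul, Complex.conj_ofReal]; ring
  simp_rw [e]
  rw [integral_const_mul]

lemma inner01_sub {G H : ℝ → ℂ}
    (hGi : Integrable (fun x => f x * (starRingEnd ℂ) (G x))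
      (volume.restrict (Set.Icc (0:ℝ) 1)))
    (hHi : Integrable (fun x => f x * (starRingEnd ℂ) (H x))
      (volume.restrict (Set.Icc (0:ℝ) 1))) :
    inner01 f (fun x => G x - H x) = inner01 f G - inner01 f H := by
  unfold inner01
  have e : ∀ x, f x * (starRingEnd ℂ) (G x - H x)
      = f x * (starRingEnd ℂ) (G x) - f x * (starRingEnd ℂ) (H x) := by
    intro x; rw [map_sub]; ring
  simp_rw [e]
  exact integral_sub hGi hHi

lemma coeffs_vanish (ha0 : 0 ≤ a) (ha1 : a < 1) (c : ℤ → ℂ) {B : ℝ} (hB : ∀ j, ‖c j‖ ≤ B)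
    (hodd : ∀ k : ℤ, Odd k → (∑' m : ℕ, (a:ℂ)^m * c (k*2^m)) = 0)
    (heven : ∀ j : ℤ, j ≠ 0 →
      ((1 - a^2 : ℝ) : ℂ) * (∑' m : ℕ, (a:ℂ)^m * c ((2*j)*2^m)) - (a:ℂ) * c j = 0)
    (j : ℤ) (hj : j ≠ 0) : c j = 0 := by
  set S : ℤ → ℂ := fun k => ∑' m : ℕ, (a:ℂ)^m * c (k*2^m) with hS
  have hBnn : 0 ≤ B := (norm_nonneg _).trans (hB 0)
  have hsum : ∀ k : ℤ, Summable (fun m : ℕ => (a:ℂ)^m * c (k*2^m)) := by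
    intro k
    apply Summable.of_norm
    apply Summable.of_nonneg_of_le (fun m => norm_nonneg _) (fun m => ?_)
      ((summable_geometric_of_lt_one ha0 ha1).mul_right B)
    rw [norm_mul, norm_pow, Complex.norm_real, Real.norm_of_nonneg ha0]
    exact mul_le_mul_of_nonneg_left (hB _) (pow_nonneg ha0 m)
  have hsplit : ∀ k : ℤ, S k = c k + (a:ℂ) * S (2*k) := by
    intro k
    rw [hS]
    simp only
    rw [(hsum k).tsum_eq_zero_add]
    congr 1
    · simp
    · rw [← tsum_mul_left]
      congr 1; funext n
      have : k * 2^(n+1) = (2*k) * 2^n := by ring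
      rw [this]; ring
  have hstep : ∀ k : ℤ, k ≠ 0 → S k = 0 → S (2*k) = 0 := by
    intro k hk h0
    have h1 := heven k hk
    have h2 := hsplit k
    rw [h0] at h2
    have hc : c k = -(a:ℂ) * S (2*k) := by linear_combination -h2
    rw [hc] at h1
    have : (1 : ℂ) * S (2*k) = 0 := by push_cast at h1 ⊢; linear_combination h1
    simpa using this
  have hSzero' : ∀ n : ℕ, ∀ k : ℤ, k.natAbs = n → k ≠ 0 → S k = 0 := by
    intro n
    induction n using Nat.strong_induction_on with
    | _ n ih =>
      intro k hn hk
      rcases Int.even_or_odd k with he | ho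
      · obtain ⟨k', rfl⟩ := he
        have hk' : k' ≠ 0 := by rintro rfl; simp at hk
        have : k' + k' = 2 * k' := by ring
        rw [this] at hk ⊢
        refine hstep k' hk' (ih k'.natAbs ?_ k' rfl hk')
        have h4 : (k'+k').natAbs = 2 * k'.natAbs := by
          rw [show k'+k' = 2*k' from by ring]; simp [Int.natAbs_mul]
        omega
      · exact hodd k ho
  have hSzero : ∀ k : ℤ, k ≠ 0 → S k = 0 := fun k hk => hSzero' k.natAbs k rfl hk
  have h2j : (2:ℤ) * j ≠ 0 := by simp [hj]
  have := hsplit j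
  rw [hSzero j hj, hSzero (2*j) h2j] at this
  simpa using this.symm

end

lemma eq_zero_of_coeffs {f : ℝ → ℂ} (hfm : StronglyMeasurable f)
    (hf2 : MemLp f 2 (volume.restrict (Set.Icc (0:ℝ) 1)))
    (h : ∀ n : ℤ, inner01 f (fourierE n) = 0) :
    f =ᵐ[volume.restrict (Set.Icc (0:ℝ) 1)] 0 := by
  haveI : Fact (0 < (1:ℝ)) := ⟨one_pos⟩
  set g : AddCircle (1:ℝ) → ℂ := AddCircle.liftIoc 1 0 f with hg
  have hgm : Measurable g := by
    have h1 : g = (Set.Ioc (0:ℝ) (0+1)).restrict f ∘ (AddCircle.measurableEquivIoc 1 0) := rfl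
    rw [h1]
    exact (hfm.measurable.comp measurable_subtype_coe).comp
      (AddCircle.measurableEquivIoc 1 0).measurable
  have hvol : (volume : Measure (AddCircle (1:ℝ))) = AddCircle.haarAddCircle := by
    rw [AddCircle.volume_eq_smul_haarAddCircle]; simp
  have hmp := AddCircle.measurePreserving_mk 1 0
  have hgf : ∀ x ∈ Set.Ioc (0:ℝ) (0+1), g x = f x := fun x hx =>
    AddCircle.liftIoc_coe_apply hx
  have hf2' : MemLp f 2 (volume.restrict (Set.Ioc (0:ℝ) (0+1))) := by
    refine hf2.mono_measure (Measure.restrict_mono (fun x hx => ?_) le_rfl)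
    simp only [zero_add] at hx
    exact Set.Ioc_subset_Icc_self hx
  have hg2 : MemLp g 2 (AddCircle.haarAddCircle) := by
    rw [← hvol, ← hmp.map_eq]
    rw [memLp_map_measure_iff hgm.stronglyMeasurable.aestronglyMeasurable
      hmp.measurable.aemeasurable]
    exact hf2'.ae_eq ((ae_restrict_mem measurableSet_Ioc).mono fun x hx => (hgf x hx).symm)
  have hcoeff : ∀ n : ℤ, fourierCoeff g n = 0 := by
    intro n
    rw [fourierCoeff_eq_intervalIntegral g n 0]
    have h2 : ∫ x in (0:ℝ)..0+1, fourier (-n) (x : AddCircle (1:ℝ)) • g x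
        = ∫ x in Set.Icc (0:ℝ) 1, f x * (starRingEnd ℂ) (fourierE n x) := by
      rw [intervalIntegral.integral_of_le (by norm_num : (0:ℝ) ≤ 0+1)]
      rw [show (0:ℝ)+1 = 1 from by norm_num, integral_Icc_eq_integral_Ioc]
      refine setIntegral_congr_fun measurableSet_Ioc fun x hx => ?_
      rw [show g x = f x from hgf x (by simpa using hx)]
      rw [fourierE_conj, smul_eq_mul, mul_comm]
      congr 1
      rw [fourier_coe_apply, fourierE]
      push_cast
      ring_nf
    rw [h2, ← inner01, h n, smul_zero]
  have hgLp : g =ᵐ[AddCircle.haarAddCircle] 0 := by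
    have hrepr : fourierBasis.repr (hg2.toLp g) = 0 := by
      ext n
      rw [fourierBasis_repr]
      have h6 : fourierCoeff (⇑(hg2.toLp g)) n = fourierCoeff g n := by
        unfold fourierCoeff
        refine integral_congr_ae ((hg2.coeFn_toLp).mono fun x hx => ?_)
        simp only [hx]
      simp [h6, hcoeff n]
    have hF0 : hg2.toLp g = 0 := by
      apply fourierBasis.repr.injective
      rw [hrepr, map_zero]
    exact (hg2.coeFn_toLp).symm.trans (by rw [hF0]; exact Lp.coeFn_zero _ _ _)
  have hfIoc : f =ᵐ[volume.restrict (Set.Ioc (0:ℝ) (0+1))] 0 := by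
    rw [← hvol] at hgLp
    have h5 := hmp.quasiMeasurePreserving.ae_eq_comp hgLp
    have h7 : f =ᵐ[volume.restrict (Set.Ioc (0:ℝ) (0+1))]
        (g ∘ (QuotientAddGroup.mk : ℝ → AddCircle (1:ℝ))) :=
      (ae_restrict_mem measurableSet_Ioc).mono fun x hx => (hgf x hx).symm
    exact h7.trans h5
  have hres : volume.restrict (Set.Icc (0:ℝ) 1) = volume.restrict (Set.Ioc (0:ℝ) 1) :=
    (Measure.restrict_congr_set Ioc_ae_eq_Icc).symm
  rw [hres]
  simpa using hfIoc

end DWFTAux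

/-- For `a ∈ [0,1)`, the orthonormal family `{ẽ_k}` is complete in `L²([0,1])`:
any `f ∈ L²([0,1])` orthogonal to every `ẽ_k` vanishes a.e., i.e. the closed
linear span of the `ẽ_k` is all of `L²([0,1])`. -/
theorem dwft_stmt10 (a : ℝ) (ha0 : 0 ≤ a) (ha1 : a < 1) :
    ∀ f : ℝ → ℂ, MemLp f 2 (volume.restrict (Set.Icc (0:ℝ) 1)) →
      (∀ k : ℤ, inner01 f (tildeE a k) = 0) →
      f =ᵐ[volume.restrict (Set.Icc (0:ℝ) 1)] 0 := by
  intro f₀ hf₀2 h₀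
  open DWFTAux in
  haveI hfin : IsFiniteMeasure (volume.restrict (Set.Icc (0:ℝ) 1)) := by
    constructor
    rw [Measure.restrict_apply_univ]
    simp [Real.volume_Icc]
  -- replace f₀ by a strongly measurable representative
  set f := hf₀2.1.mk f₀ with hfdef
  have hff : f₀ =ᵐ[volume.restrict (Set.Icc (0:ℝ) 1)] f := hf₀2.1.ae_eq_mk
  have hfm : StronglyMeasurable f := hf₀2.1.stronglyMeasurable_mk
  have hf2 : MemLp f 2 (volume.restrict (Set.Icc (0:ℝ) 1)) := hf₀2.ae_eq hff
  have hinner : ∀ g : ℝ → ℂ, inner01 f g = inner01 f₀ g := by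
    intro g
    exact integral_congr_ae (hff.symm.mono fun x hx => by simp only [hx])
  have h : ∀ k : ℤ, inner01 f (tildeE a k) = 0 := fun k => (hinner _).trans (h₀ k)
  have hfi : Integrable f (volume.restrict (Set.Icc (0:ℝ) 1)) :=
    hf2.integrable one_le_two
  have ha2pos : 0 < 1 - a^2 := by nlinarith
  -- the Fourier coefficients
  set c : ℤ → ℂ := fun j => inner01 f (fourierE j) with hc
  have hB : ∀ j, ‖c j‖ ≤ ∫ x in Set.Icc (0:ℝ) 1, ‖f x‖ := fun j => cj_bound j
  -- k = 0
  have hc0 : c 0 = 0 := by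
    have : fourierE 0 = tildeE a 0 := by
      funext x; simp [fourierE, tildeE]
    rw [hc]; simp only
    rw [this, h 0]
  -- odd k
  have hodd : ∀ k : ℤ, Odd k → (∑' m : ℕ, (a:ℂ)^m * c (k*2^m)) = 0 := by
    intro k hk
    have hk0 : k ≠ 0 := by rintro rfl; exact (Int.not_odd_iff_even.mpr Even.zero) hk
    have ht : tildeE a k = fun x =>
        ((Real.sqrt (1 - a^2) : ℝ) : ℂ) * ∑' m : ℕ, (a:ℂ)^m * fourierE (k*2^m) x := by
      funext x; rw [tildeE, if_neg hk0, if_pos hk, hatE]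
    have := h k
    rw [ht, inner01_real_mul, inner_tsumF ha0 ha1 hfi] at this
    have hsq : ((Real.sqrt (1 - a^2) : ℝ) : ℂ) ≠ 0 := by
      rw [Complex.ofReal_ne_zero]
      positivity
    exact (mul_eq_zero.mp this).resolve_left hsq
  -- even k = 2j
  have heven : ∀ j : ℤ, j ≠ 0 →
      ((1 - a^2 : ℝ) : ℂ) * (∑' m : ℕ, (a:ℂ)^m * c ((2*j)*2^m)) - (a:ℂ) * c j = 0 := by
    intro j hj
    have h2j0 : (2:ℤ)*j ≠ 0 := by simp [hj]
    have h2jodd : ¬ Odd ((2:ℤ)*j) := by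
      rw [← Int.not_even_iff_odd]
      simp [even_two_mul]
    have hdiv : ((2:ℤ)*j)/2 = j := Int.mul_ediv_cancel_left j two_ne_zero
    have ht : tildeE a (2*j) = fun x =>
        ((1 - a^2 : ℝ) : ℂ) * (∑' m : ℕ, (a:ℂ)^m * fourierE ((2*j)*2^m) x)
          - ((a : ℝ) : ℂ) * fourierE j x := by
      funext x
      rw [tildeE, if_neg h2j0, if_neg h2jodd, hdiv]
    have h8 := h (2*j)
    rw [ht] at h8
    rw [inner01_sub, inner01_real_mul, inner01_real_mul,
      inner_tsumF ha0 ha1 hfi] at h8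
    · exact h8
    · refine int_mul_conj hfi (continuous_const.mul (tsumF_continuous ha0 ha1 _))
        (C := (1-a^2) * (1-a)⁻¹) fun x => ?_
      rw [norm_mul, Complex.norm_real, Real.norm_of_nonneg ha2pos.le]
      exact mul_le_mul_of_nonneg_left (tsumF_bound ha0 ha1 _ x) ha2pos.le
    · refine int_mul_conj hfi (continuous_const.mul (fourierE_continuous _))
        (C := a) fun x => ?_
      rw [norm_mul, Complex.norm_real, Real.norm_of_nonneg ha0, fourierE_norm, mul_one]
  have hcall : ∀ j : ℤ, c j = 0 := by
    intro j
    rcases eq_or_ne j 0 with rfl | hj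
    · exact hc0
    · exact coeffs_vanish ha0 ha1 c hB hodd heven j hj
  have := eq_zero_of_coeffs hfm hf2 hcall
  exact hff.trans this
end
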